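/- For r ∈ (0,1), the integral ∫₁^∞ (√(1−r²) · √x) / (√r · √(x²−1) · (x²−r²)) dx converges and equals 2√π (√(1−r²)/√r) (Γ(3/4)/Γ(1/4)) ₂F₁(3/4,1,5/4;r²). -/

import Mathlib

/-!
Expanding `1 / (x² - r²) = ∑ r^(2n) / x^(2n+2)` turns the integral into
`∑ r^(2n) ∫₁^∞ x^(-2n-3/2) (x² - 1)^(-1/2) dx`; dominated convergence justifies the
interchange, since the `n`-th term is at most `r^(2n)` times the `0`-th one. The substitution
`t = x⁻²` gives `∫₁^∞ x^(-(2a+2b-1)) (x² - 1)^(b-1) dx = B(a, b) / 2`, and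
`B(n + 3/4, 1/2) = B(3/4, 1/2) (3/4)ₙ / (5/4)ₙ` with `B(3/4, 1/2) = 4 √π Γ(3/4) / Γ(1/4)`
turns the series into `₂F₁(3/4, 1; 5/4; r²)`.
-/

open MeasureTheory

noncomputable def hyp2F1 (a b c x : ℝ) : ℝ :=
  ∑' n : ℕ, ((ascPochhammer ℝ n).eval a * (ascPochhammer ℝ n).eval b /
      (ascPochhammer ℝ n).eval c) * x ^ n / (n.factorial : ℝ)

open Real Set ProbabilityTheory

lemma re_cpow_mul_one_sub_cpow {t : ℝ} (ht : t ∈ Icc 0 1) (a b : ℝ) :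
    RCLike.re ((t : ℂ) ^ ((a : ℂ) - 1) * (1 - (t : ℂ)) ^ ((b : ℂ) - 1)) =
      t ^ (a - 1) * (1 - t) ^ (b - 1) := by
  simp only [← Complex.ofReal_one, ← Complex.ofReal_sub]
  rw [← Complex.ofReal_cpow ht.1, ← Complex.ofReal_cpow (sub_nonneg.2 ht.2),
    ← Complex.ofReal_mul, RCLike.re_to_complex, Complex.ofReal_re]

lemma integrableOn_Ioo_cpow_mul_one_sub_cpow {a b : ℝ} (ha : 0 < a) (hb : 0 < b) :
    IntegrableOn (fun t : ℝ => (t : ℂ) ^ ((a : ℂ) - 1) * (1 - (t : ℂ)) ^ ((b : ℂ) - 1))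
      (Ioo 0 1) :=
  ((intervalIntegrable_iff_integrableOn_Ioc_of_le zero_le_one).1
    (Complex.betaIntegral_convergent (by simpa) (by simpa))).mono_set Ioo_subset_Ioc_self

lemma integrableOn_Ioo_rpow_mul_one_sub_rpow {a b : ℝ} (ha : 0 < a) (hb : 0 < b) :
    IntegrableOn (fun t : ℝ => t ^ (a - 1) * (1 - t) ^ (b - 1)) (Ioo 0 1) :=
  IntegrableOn.congr_fun (integrableOn_Ioo_cpow_mul_one_sub_cpow ha hb).re
    (fun _ ht => re_cpow_mul_one_sub_cpow (Ioo_subset_Icc_self ht) a b) measurableSet_Ioo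

lemma integral_Ioo_rpow_mul_one_sub_rpow {a b : ℝ} (ha : 0 < a) (hb : 0 < b) :
    ∫ t in Ioo (0 : ℝ) 1, t ^ (a - 1) * (1 - t) ^ (b - 1) = beta a b := by
  rw [beta_eq_betaIntegralReal a b ha hb, Complex.betaIntegral,
    intervalIntegral.integral_of_le zero_le_one, integral_Ioc_eq_integral_Ioo,
    ← RCLike.re_to_complex, ← integral_re (integrableOn_Ioo_cpow_mul_one_sub_cpow ha hb)]
  exact setIntegral_congr_fun measurableSet_Ioo fun t ht =>
    (re_cpow_mul_one_sub_cpow (Ioo_subset_Icc_self ht) a b).symm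

lemma image_rpow_neg_two_Ioi_one : (fun x : ℝ => x ^ (-2 : ℝ)) '' Ioi 1 = Ioo 0 1 := by
  ext y
  constructor
  · rintro ⟨x, hx, rfl⟩
    exact ⟨rpow_pos_of_pos (one_pos.trans hx) _, rpow_lt_one_of_one_lt_of_neg hx (by norm_num)⟩
  · rintro ⟨hy0, hy1⟩
    refine ⟨y ^ (-2⁻¹ : ℝ), one_lt_rpow_of_pos_of_lt_one_of_neg hy0 hy1 (by norm_num), ?_⟩
    show (y ^ (-2⁻¹ : ℝ)) ^ (-2 : ℝ) = y
    rw [← rpow_mul hy0.le]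
    norm_num

lemma injOn_rpow_neg_two_Ioi_one : InjOn (fun x : ℝ => x ^ (-2 : ℝ)) (Ioi 1) :=
  (rpow_left_injOn (by norm_num : (-2 : ℝ) ≠ 0)).mono fun x (hx : 1 < x) =>
    show 0 ≤ x from zero_le_one.trans hx.le

lemma hasDerivWithinAt_rpow_neg_two {x : ℝ} (hx : x ≠ 0) (s : Set ℝ) :
    HasDerivWithinAt (fun x : ℝ => x ^ (-2 : ℝ)) (-2 * x ^ (-2 - 1 : ℝ)) s x :=
  (hasDerivAt_rpow_const (Or.inl hx)).hasDerivWithinAt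

lemma abs_deriv_smul_rpow_mul_one_sub_rpow {x : ℝ} (hx : 1 < x) (a b : ℝ) :
    |-2 * x ^ (-2 - 1 : ℝ)| • ((x ^ (-2 : ℝ)) ^ (a - 1) * (1 - x ^ (-2 : ℝ)) ^ (b - 1)) =
      2 * (x ^ (-(2 * a + 2 * b - 1)) * (x ^ 2 - 1) ^ (b - 1)) := by
  have hx0 : 0 < x := one_pos.trans hx
  have hsq : 1 - x ^ (-2 : ℝ) = (x ^ 2 - 1) * x ^ (-2 : ℝ) := by
    rw [rpow_neg hx0.le, rpow_two]
    field_simp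
  have hexp : x ^ (-(2 * a + 2 * b - 1)) =
      x ^ (-2 - 1 : ℝ) * x ^ (-2 * (a - 1)) * x ^ (-2 * (b - 1)) := by
    rw [← rpow_add hx0, ← rpow_add hx0]
    ring_nf
  rw [smul_eq_mul, abs_mul, abs_of_pos (rpow_pos_of_pos hx0 _), hsq,
    mul_rpow (by nlinarith) (rpow_nonneg hx0.le _), ← rpow_mul hx0.le, ← rpow_mul hx0.le, hexp,
    show |(-2 : ℝ)| = 2 by norm_num]
  ring

lemma integrableOn_Ioi_one_rpow_mul_sq_sub_one_rpow {a b : ℝ} (ha : 0 < a) (hb : 0 < b) :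
    IntegrableOn (fun x : ℝ => x ^ (-(2 * a + 2 * b - 1)) * (x ^ 2 - 1) ^ (b - 1)) (Ioi 1) := by
  have h := (integrableOn_image_iff_integrableOn_abs_deriv_smul measurableSet_Ioi
    (fun _ hx => hasDerivWithinAt_rpow_neg_two (one_pos.trans hx).ne' _) injOn_rpow_neg_two_Ioi_one
    (fun t => t ^ (a - 1) * (1 - t) ^ (b - 1))).1
    (image_rpow_neg_two_Ioi_one ▸ integrableOn_Ioo_rpow_mul_one_sub_rpow ha hb)
  have h2 := h.congr_fun (fun x hx => abs_deriv_smul_rpow_mul_one_sub_rpow hx a b)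
    measurableSet_Ioi
  exact IntegrableOn.congr_fun (h2.div_const 2) (fun x _ => mul_div_cancel_left₀ _ two_ne_zero)
    measurableSet_Ioi

lemma integral_Ioi_one_rpow_mul_sq_sub_one_rpow {a b : ℝ} (ha : 0 < a) (hb : 0 < b) :
    ∫ x in Ioi (1 : ℝ), x ^ (-(2 * a + 2 * b - 1)) * (x ^ 2 - 1) ^ (b - 1) = beta a b / 2 := by
  have h := integral_image_eq_integral_abs_deriv_smul measurableSet_Ioi
    (fun _ hx => hasDerivWithinAt_rpow_neg_two (one_pos.trans hx).ne' _) injOn_rpow_neg_two_Ioi_one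
    (fun t => t ^ (a - 1) * (1 - t) ^ (b - 1))
  rw [image_rpow_neg_two_Ioi_one, integral_Ioo_rpow_mul_one_sub_rpow ha hb,
    setIntegral_congr_fun measurableSet_Ioi fun x hx =>
      abs_deriv_smul_rpow_mul_one_sub_rpow hx a b, integral_const_mul] at h
  linarith

lemma Gamma_add_nat_eq_ascPochhammer_mul {x : ℝ} (hx : 0 < x) (n : ℕ) :
    Gamma (x + n) = (ascPochhammer ℝ n).eval x * Gamma x := by
  induction n with
  | zero => simp
  | succ n ih =>
    rw [Nat.cast_succ, ← add_assoc, Gamma_add_one (by positivity), ih, ascPochhammer_succ_eval]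
    ring

lemma beta_add_nat {a b : ℝ} (ha : 0 < a) (hb : 0 < b) (n : ℕ) :
    beta (a + n) b =
      (ascPochhammer ℝ n).eval a / (ascPochhammer ℝ n).eval (a + b) * beta a b := by
  have hab : 0 < a + b := ha.trans (lt_add_of_pos_right a hb)
  have := (ascPochhammer_pos n _ hab).ne'
  have := (Gamma_pos_of_pos hab).ne'
  rw [beta, beta, add_right_comm, Gamma_add_nat_eq_ascPochhammer_mul ha,
    Gamma_add_nat_eq_ascPochhammer_mul hab]
  field_simp

lemma beta_three_quarters_half :
    beta (3 / 4) (1 / 2) = 4 * √π * (Gamma (3 / 4) / Gamma (1 / 4)) := by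
  have h : Gamma (3 / 4 + 1 / 2) = Gamma (1 / 4) / 4 := by
    rw [show (3 / 4 + 1 / 2 : ℝ) = 1 / 4 + 1 by norm_num, Gamma_add_one (by norm_num)]
    ring
  have := (Gamma_pos_of_pos (by norm_num : (0 : ℝ) < 1 / 4)).ne'
  rw [beta, h, Gamma_one_half_eq]
  field_simp

lemma hyp2F1_one_eq_tsum (a c x : ℝ) :
    hyp2F1 a 1 c x =
      ∑' n : ℕ, (ascPochhammer ℝ n).eval a / (ascPochhammer ℝ n).eval c * x ^ n := by
  refine tsum_congr fun n => ?_
  have := (Nat.cast_pos.2 n.factorial_pos : (0 : ℝ) < n.factorial).ne'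
  rw [ascPochhammer_eval_one]
  field_simp

noncomputable def sqrtKernel (n : ℕ) (x : ℝ) : ℝ :=
  √x / (√(x ^ 2 - 1) * (x ^ 2) ^ (n + 1))

lemma sqrtKernel_nonneg (n : ℕ) (x : ℝ) : 0 ≤ sqrtKernel n x := by
  unfold sqrtKernel
  positivity

lemma sqrtKernel_le_sqrtKernel_zero {x : ℝ} (hx : 1 < x) (n : ℕ) :
    sqrtKernel n x ≤ sqrtKernel 0 x := by
  have hx2 : 1 < x ^ 2 := by nlinarith
  have hs : 0 < √(x ^ 2 - 1) := sqrt_pos.2 (by linarith)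
  refine div_le_div_of_nonneg_left (sqrt_nonneg x) (by positivity) ?_
  exact mul_le_mul_of_nonneg_left (pow_le_pow_right₀ hx2.le (by omega)) hs.le

lemma sqrtKernel_eq_rpow {x : ℝ} (hx : 1 < x) (n : ℕ) :
    sqrtKernel n x =
      x ^ (-(2 * (3 / 4 + (n : ℝ)) + 2 * (1 / 2) - 1)) * (x ^ 2 - 1) ^ ((1 : ℝ) / 2 - 1) := by
  have hx0 : 0 < x := one_pos.trans hx
  have hpow : x ^ (-(2 * (3 / 4 + (n : ℝ)) + 2 * (1 / 2) - 1)) = √x / (x ^ 2) ^ (n + 1) := by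
    rw [show -(2 * (3 / 4 + (n : ℝ)) + 2 * (1 / 2) - 1) = 1 / 2 - ((2 * (n + 1) : ℕ) : ℝ) by
        push_cast; ring, rpow_sub hx0, rpow_natCast, sqrt_eq_rpow, pow_mul]
  rw [sqrtKernel, hpow, show (1 : ℝ) / 2 - 1 = -(1 / 2) by norm_num, rpow_neg (by nlinarith),
    ← sqrt_eq_rpow]
  ring

lemma integrableOn_sqrtKernel (n : ℕ) : IntegrableOn (sqrtKernel n) (Ioi 1) :=
  (integrableOn_Ioi_one_rpow_mul_sq_sub_one_rpow (by positivity) one_half_pos).congr_fun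
    (fun _ hx => (sqrtKernel_eq_rpow hx n).symm) measurableSet_Ioi

lemma integral_sqrtKernel (n : ℕ) :
    ∫ x in Ioi (1 : ℝ), sqrtKernel n x = beta (3 / 4 + n) (1 / 2) / 2 := by
  rw [setIntegral_congr_fun measurableSet_Ioi (fun _ hx => sqrtKernel_eq_rpow hx n),
    integral_Ioi_one_rpow_mul_sq_sub_one_rpow (by positivity) one_half_pos]

lemma hasSum_sqrtKernel {x c : ℝ} (hx : 1 < x) (hc0 : 0 ≤ c) (hc1 : c < 1) :
    HasSum (fun n : ℕ => c ^ n * sqrtKernel n x) (√x / (√(x ^ 2 - 1) * (x ^ 2 - c))) := by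
  have hx0 : x ≠ 0 := (one_pos.trans hx).ne'
  have hx2 : 1 < x ^ 2 := by nlinarith
  have hq1 : c / x ^ 2 < 1 := (div_lt_one (by positivity)).2 (hc1.trans hx2)
  have hsub : x ^ 2 - c ≠ 0 := by linarith
  have hsum : √x / (√(x ^ 2 - 1) * (x ^ 2 - c)) = sqrtKernel 0 x * (1 - c / x ^ 2)⁻¹ := by
    rw [sqrtKernel, zero_add, pow_one]
    field_simp
  rw [hsum]
  refine ((hasSum_geometric_of_lt_one (by positivity) hq1).mul_left _).congr_fun fun n => ?_
  rw [sqrtKernel, sqrtKernel]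
  ring

lemma hasSum_geometric_mul_sqrtKernel_zero {c : ℝ} (hc0 : 0 ≤ c) (hc1 : c < 1) (x : ℝ) :
    HasSum (fun n : ℕ => c ^ n * sqrtKernel 0 x) ((1 - c)⁻¹ * sqrtKernel 0 x) :=
  (hasSum_geometric_of_lt_one hc0 hc1).mul_right _

lemma integrableOn_sqrt_div_sq_sub {c : ℝ} (hc0 : 0 ≤ c) (hc1 : c < 1) :
    IntegrableOn (fun x : ℝ => √x / (√(x ^ 2 - 1) * (x ^ 2 - c))) (Ioi 1) := by
  refine Integrable.mono' ((integrableOn_sqrtKernel 0).const_mul (1 - c)⁻¹)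
    (Measurable.aestronglyMeasurable (by fun_prop))
    (ae_restrict_of_forall_mem measurableSet_Ioi fun x hx => ?_)
  have hsum := hasSum_sqrtKernel hx hc0 hc1
  rw [norm_of_nonneg (hsum.nonneg fun n => by have := sqrtKernel_nonneg n x; positivity)]
  exact hasSum_le (fun n => mul_le_mul_of_nonneg_left (sqrtKernel_le_sqrtKernel_zero hx n)
    (by positivity)) hsum (hasSum_geometric_mul_sqrtKernel_zero hc0 hc1 x)

lemma hasSum_integral_sqrt_div_sq_sub {c : ℝ} (hc0 : 0 ≤ c) (hc1 : c < 1) :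
    HasSum (fun n : ℕ => c ^ n * (beta (3 / 4 + n) (1 / 2) / 2))
      (∫ x in Ioi (1 : ℝ), √x / (√(x ^ 2 - 1) * (x ^ 2 - c))) := by
  simp_rw [← integral_sqrtKernel, ← integral_const_mul]
  refine hasSum_integral_of_dominated_convergence (fun n x => c ^ n * sqrtKernel 0 x)
    (fun n => ((integrableOn_sqrtKernel n).const_mul _).aestronglyMeasurable)
    (fun n => ae_restrict_of_forall_mem measurableSet_Ioi fun x hx => ?_)
    (Filter.Eventually.of_forall fun x =>
      (hasSum_geometric_mul_sqrtKernel_zero hc0 hc1 x).summable)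
    ?_ (ae_restrict_of_forall_mem measurableSet_Ioi fun x hx => hasSum_sqrtKernel hx hc0 hc1)
  · rw [norm_of_nonneg (mul_nonneg (pow_nonneg hc0 n) (sqrtKernel_nonneg n x))]
    exact mul_le_mul_of_nonneg_left (sqrtKernel_le_sqrtKernel_zero hx n) (pow_nonneg hc0 n)
  · simp_rw [fun x => (hasSum_geometric_mul_sqrtKernel_zero hc0 hc1 x).tsum_eq]
    exact (integrableOn_sqrtKernel 0).const_mul _

lemma integral_sqrt_div_sq_sub {c : ℝ} (hc0 : 0 ≤ c) (hc1 : c < 1) :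
    ∫ x in Ioi (1 : ℝ), √x / (√(x ^ 2 - 1) * (x ^ 2 - c)) =
      2 * √π * (Gamma (3 / 4) / Gamma (1 / 4)) * hyp2F1 (3 / 4) 1 (5 / 4) c := by
  rw [hyp2F1_one_eq_tsum, ← tsum_mul_left, ← (hasSum_integral_sqrt_div_sq_sub hc0 hc1).tsum_eq]
  refine tsum_congr fun n => ?_
  rw [beta_add_nat (by norm_num) one_half_pos, beta_three_quarters_half,
    show (3 / 4 + 1 / 2 : ℝ) = 5 / 4 by norm_num]
  ring

/-- For `r ∈ (0,1)`, `∫₁^∞ (√(1−r²) √x)/(√r √(x²−1) (x²−r²)) dx` converges and equals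
`2√π (√(1−r²)/√r) (Γ(3/4)/Γ(1/4)) ₂F₁(3/4,1,5/4;r²)`. -/
theorem stmt5 (r : ℝ) (hr : r ∈ Set.Ioo (0 : ℝ) 1) :
    IntegrableOn
        (fun x : ℝ => Real.sqrt (1 - r ^ 2) * Real.sqrt x /
          (Real.sqrt r * Real.sqrt (x ^ 2 - 1) * (x ^ 2 - r ^ 2))) (Set.Ioi 1) ∧
      ∫ x in Set.Ioi (1 : ℝ), Real.sqrt (1 - r ^ 2) * Real.sqrt x /
          (Real.sqrt r * Real.sqrt (x ^ 2 - 1) * (x ^ 2 - r ^ 2)) =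
        2 * Real.sqrt Real.pi * (Real.sqrt (1 - r ^ 2) / Real.sqrt r) *
          (Real.Gamma (3 / 4) / Real.Gamma (1 / 4)) * hyp2F1 (3 / 4) 1 (5 / 4) (r ^ 2) := by
  have hc0 : 0 ≤ r ^ 2 := sq_nonneg r
  have hc1 : r ^ 2 < 1 := by nlinarith [hr.1, hr.2]
  have hsplit : (fun x : ℝ => √(1 - r ^ 2) * √x / (√r * √(x ^ 2 - 1) * (x ^ 2 - r ^ 2))) =
      fun x => √(1 - r ^ 2) / √r * (√x / (√(x ^ 2 - 1) * (x ^ 2 - r ^ 2))) := by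
    ext x
    rw [mul_assoc √r, mul_div_mul_comm]
  rw [hsplit, integral_const_mul, integral_sqrt_div_sq_sub hc0 hc1]
  exact ⟨(integrableOn_sqrt_div_sq_sub hc0 hc1).const_mul _, by ring⟩
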